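/- Let q be odd, χ a nontrivial character of (F_q,+), and ρ an irreducible unitary representation of H(W), W = F_q^{2n}, on a finite-dimensional complex Hilbert space V, with central character χ. Then the operators ρ(w,0), w ∈ W, form an orthogonal basis of End(V) with respect to the normalized Hilbert–Schmidt inner product B(T,S) = (1/dim V)·trace(T S^*), each of norm 1; equivalently, the Weyl transform f ↦ Σ_{w∈W} f(w)·ρ(w,0) is a bijective isometry from ℓ²(W) (counting measure) onto End(V) equipped with B. -/

import Mathlib

/-!
Write `P w = ρ(w,0)`. The central character makes `P` a projective representation,
`P w * P w' = χ(½⟨w,w'⟩) • P (w + w')`, and unitarity gives `P w ^* = P (-w)`, so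
`B(P w, P w')` is a root of unity times `tr P (w - w') / dim V`. For `u ≠ 0`, conjugation by
`P v` multiplies `P u` by `χ⟨v,u⟩`, which is `≠ 1` for a suitable `v`; hence `tr P u = 0` and the
family is orthonormal, so linearly independent.

For spanning, the twisted average `C_u X = ∑ w, χ⟨u,w⟩ • P w X (P w)⁻¹` transforms under
conjugation exactly like `P u`, so by Schur's lemma it is a multiple of `P u`; summing over `u`,
orthogonality of characters gives `∑ u, C_u X = |W| • X`.
-/

open Matrix

set_option linter.unusedSectionVars false

namespace Stmt4

/-- The standard symplectic form on `W = F^n × F^n`: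
`⟨(x,y),(x',y')⟩ = x·y' − y·x'`. -/
def symp {F : Type} [Field F] {n : ℕ} (u v : (Fin n → F) × (Fin n → F)) : F :=
  u.1 ⬝ᵥ v.2 - u.2 ⬝ᵥ v.1

/-- The Heisenberg group `H(W) = W ⊕ F` attached to `W = F^n × F^n`, with
product `(w,t)·(w',t') = (w + w', t + t' + ½⟨w,w'⟩)`. -/
@[ext]
structure Heis (F : Type) [Field F] (n : ℕ) where
  w : (Fin n → F) × (Fin n → F)
  t : F

namespace Heis

variable {F : Type} [Field F] {n : ℕ}

instance : Mul (Heis F n) :=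
  ⟨fun a b => ⟨a.w + b.w, a.t + b.t + (2 : F)⁻¹ * symp a.w b.w⟩⟩

instance : One (Heis F n) := ⟨⟨0, 0⟩⟩

instance : Inv (Heis F n) := ⟨fun a => ⟨-a.w, -a.t⟩⟩

lemma mul_w (a b : Heis F n) : (a * b).w = a.w + b.w := rfl
lemma mul_t (a b : Heis F n) : (a * b).t = a.t + b.t + (2 : F)⁻¹ * symp a.w b.w := rfl
lemma one_w : (1 : Heis F n).w = 0 := rfl
lemma one_t : (1 : Heis F n).t = 0 := rfl
lemma inv_w (a : Heis F n) : (a⁻¹).w = -a.w := rfl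
lemma inv_t (a : Heis F n) : (a⁻¹).t = -a.t := rfl

lemma symp_self (u : (Fin n → F) × (Fin n → F)) : symp u u = 0 := by
  simp [symp, dotProduct_comm]

instance : Group (Heis F n) where
  mul_assoc a b c := by
    refine Heis.ext ?_ ?_
    · simp [mul_w, add_assoc]
    · simp only [mul_t, mul_w, symp, Prod.fst_add, Prod.snd_add,
        add_dotProduct, dotProduct_add]
      ring
  one_mul a := by
    refine Heis.ext ?_ ?_
    · simp [mul_w, one_w]
    · simp [mul_t, one_w, one_t, symp]
  mul_one a := by
    refine Heis.ext ?_ ?_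
    · simp [mul_w, one_w]
    · simp [mul_t, one_w, one_t, symp]
  inv_mul_cancel a := by
    refine Heis.ext ?_ ?_
    · simp [mul_w, inv_w, one_w]
    · have h : symp (-a.w) a.w = 0 := by
        simp only [symp, Prod.fst_neg, Prod.snd_neg, neg_dotProduct]
        rw [dotProduct_comm]
        ring
      simp [mul_t, inv_w, inv_t, one_t, h]

end Heis

/-- A representation `ρ` of the Heisenberg group has central character `χ` if
the central element `(0,t)` acts by the scalar `χ t`. -/
def HasCentralChar {F : Type} [Field F] {n : ℕ} {V : Type} [AddCommGroup V] [Module ℂ V]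
    (ρ : Representation ℂ (Heis F n) V) (χ : AddChar F ℂ) : Prop :=
  ∀ t : F, ∀ v : V, ρ ⟨0, t⟩ v = χ t • v

/-- Irreducibility of a representation: the space is nonzero, and the only
invariant subspaces are `⊥` and `⊤`. -/
def IsIrred {G : Type} [Group G] {V : Type} [AddCommGroup V] [Module ℂ V]
    (ρ : Representation ℂ G V) : Prop :=
  (∃ v : V, v ≠ 0) ∧
    ∀ p : Submodule ℂ V, (∀ g : G, ∀ v ∈ p, ρ g v ∈ p) → p = ⊥ ∨ p = ⊤

variable {F : Type} [Field F] {n : ℕ}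

/-- The normalized Hilbert–Schmidt inner product
`B(T,S) = (1/dim V) · trace (T S^*)` on `End(V)`. -/
noncomputable def hsForm {V : Type} [NormedAddCommGroup V] [InnerProductSpace ℂ V]
    [FiniteDimensional ℂ V] (T S : V →ₗ[ℂ] V) : ℂ :=
  LinearMap.trace ℂ V (T ∘ₗ LinearMap.adjoint S) / (Module.finrank ℂ V : ℂ)

lemma two_ne_zero_of_odd_card [Fintype F] (hodd : Odd (Fintype.card F)) : (2 : F) ≠ 0 :=
  Ring.two_ne_zero fun h => by
    have := FiniteField.even_card_iff_char_two.1 h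
    rw [Nat.odd_iff] at hodd
    omega

lemma symp_add_left (a b c : (Fin n → F) × (Fin n → F)) :
    symp (a + b) c = symp a c + symp b c := by
  simp only [symp, Prod.fst_add, Prod.snd_add, add_dotProduct]
  ring

lemma symp_add_right (a b c : (Fin n → F) × (Fin n → F)) :
    symp a (b + c) = symp a b + symp a c := by
  simp only [symp, Prod.fst_add, Prod.snd_add, dotProduct_add]
  ring

lemma symp_neg_right (a b : (Fin n → F) × (Fin n → F)) : symp a (-b) = -symp a b := by
  simp only [symp, Prod.fst_neg, Prod.snd_neg, dotProduct_neg]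
  ring

lemma symp_antisymm (a b : (Fin n → F) × (Fin n → F)) : symp a b = -symp b a := by
  simp only [symp, dotProduct_comm a.1 b.2, dotProduct_comm a.2 b.1]
  ring

def sympLeft (u : (Fin n → F) × (Fin n → F)) : ((Fin n → F) × (Fin n → F)) →+ F where
  toFun v := symp v u
  map_zero' := by simp [symp]
  map_add' a b := symp_add_left a b u

lemma sympLeft_surjective {u : (Fin n → F) × (Fin n → F)} (hu : u ≠ 0) :
    Function.Surjective (sympLeft u) := by
  intro s
  obtain ⟨i, hi⟩ | ⟨i, hi⟩ : (∃ i, u.1 i ≠ 0) ∨ ∃ i, u.2 i ≠ 0 := by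
    by_contra! h
    exact hu (Prod.ext (funext h.1) (funext h.2))
  · refine ⟨(0, Pi.single i (-s / u.1 i)), ?_⟩
    simp [sympLeft, symp, div_mul_cancel₀ _ hi]
  · refine ⟨(Pi.single i (s / u.2 i), 0), ?_⟩
    simp [sympLeft, symp, div_mul_cancel₀ _ hi]

lemma sum_char_symp_eq_zero [Fintype F] {χ : AddChar F ℂ} (hχ : χ ≠ 1)
    {u : (Fin n → F) × (Fin n → F)} (hu : u ≠ 0) :
    ∑ v : (Fin n → F) × (Fin n → F), χ (symp v u) = 0 := by
  refine (AddChar.sum_eq_zero_iff_ne_zero (ψ := χ.compAddMonoidHom (sympLeft u))).2 ?_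
  rw [AddChar.ne_zero_iff]
  obtain ⟨s, hs⟩ := AddChar.ne_one_iff.1 hχ
  obtain ⟨v, rfl⟩ := sympLeft_surjective hu s
  exact ⟨v, hs⟩

namespace Heis

lemma mk_eq_mk_zero_mul (w : (Fin n → F) × (Fin n → F)) (t : F) :
    (⟨w, t⟩ : Heis F n) = ⟨0, t⟩ * ⟨w, 0⟩ :=
  Heis.ext (zero_add w).symm (by simp [mul_t, symp])

lemma mk_inv (w : (Fin n → F) × (Fin n → F)) (t : F) : (⟨w, t⟩ : Heis F n)⁻¹ = ⟨-w, -t⟩ := rfl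

lemma mul_mul_inv (h2 : (2 : F) ≠ 0) (g h : Heis F n) :
    g * h * g⁻¹ = ⟨h.w, h.t + symp g.w h.w⟩ := by
  refine Heis.ext (by simp [mul_w, inv_w]) ?_
  simp only [mul_t, mul_w, inv_w, inv_t, symp_neg_right, symp_add_left, symp_self,
    symp_antisymm h.w g.w]
  field_simp
  ring

end Heis

section GroupRepresentation

variable {G V : Type} [Group G] [AddCommGroup V] [Module ℂ V] {ρ : Representation ℂ G V}

lemma IsIrred.nontrivial (hirr : IsIrred ρ) : Nontrivial V :=
  let ⟨v, hv⟩ := hirr.1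
  ⟨⟨v, 0, hv⟩⟩

lemma IsIrred.isIrreducible (hirr : IsIrred ρ) : ρ.IsIrreducible where
  exists_pair_ne :=
    let ⟨v, hv⟩ := hirr.1
    ⟨⊥, ⊤, fun h => hv (show v ∈ (⊥ : Subrepresentation ρ) from h ▸ trivial)⟩
  eq_bot_or_eq_top σ :=
    (hirr.2 σ.toSubmodule σ.apply_mem_toSubmodule).imp
      (fun h => Subrepresentation.toSubmodule_injective h)
      (fun h => Subrepresentation.toSubmodule_injective h)

lemma IsIrred.exists_eq_smul_one [FiniteDimensional ℂ V] (hirr : IsIrred ρ) {T : V →ₗ[ℂ] V}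
    (hT : ∀ g, ρ.linHom ρ g T = T) : ∃ c : ℂ, T = c • 1 := by
  have := hirr.isIrreducible
  have hcomm (g : G) : T ∘ₗ ρ g = ρ g ∘ₗ T := by
    ext v
    simpa using congr($(hT g) (ρ g v)).symm
  obtain ⟨c, hc⟩ :=
    Representation.IsIrreducible.algebraMap_intertwiningMap_bijective_of_isAlgClosed.2
      ⟨T, hcomm⟩
  exact ⟨c, congrArg (·.toLinearMap) hc.symm⟩

lemma linHom_self_mul (g : G) (A B : V →ₗ[ℂ] V) :
    ρ.linHom ρ g (A * B) = ρ.linHom ρ g A * ρ.linHom ρ g B := by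
  ext v
  simp

lemma linHom_self_rho (g h : G) : ρ.linHom ρ g (ρ h) = ρ (g * h * g⁻¹) := by
  ext v
  simp

end GroupRepresentation

lemma adjoint_rho_eq_rho_inv {G V : Type} [Group G] [NormedAddCommGroup V]
    [InnerProductSpace ℂ V] [FiniteDimensional ℂ V] {ρ : Representation ℂ G V}
    (hunitary : ∀ (h : G) (u v : V), (inner ℂ (ρ h u) (ρ h v) : ℂ) = inner ℂ u v) (g : G) :
    LinearMap.adjoint (ρ g : V →ₗ[ℂ] V) = ρ g⁻¹ :=
  ((LinearMap.eq_adjoint_iff _ _).2 fun x y => by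
    rw [← hunitary g, ρ.self_inv_apply]).symm

lemma linearIndependent_of_biorthogonal {R M ι : Type*} [CommRing R] [AddCommGroup M]
    [Module R M] {v : ι → M} (φ : ι → Module.Dual R M) (h_self : ∀ i, φ i (v i) = 1)
    (h_ne : ∀ i j, i ≠ j → φ j (v i) = 0) : LinearIndependent R v := by
  rw [linearIndependent_iff']
  intro s g hg i hi
  have := congrArg (φ i) hg
  rwa [map_sum, Finset.sum_eq_single_of_mem i hi (fun j _ hji => by
    rw [map_smul, h_ne j i hji, smul_zero]), map_smul, h_self, smul_eq_mul, mul_one,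
    map_zero] at this


namespace HasCentralChar

variable {V : Type} [AddCommGroup V] [Module ℂ V] {χ : AddChar F ℂ}
  {ρ : Representation ℂ (Heis F n) V}

lemma rho_mk (hcc : HasCentralChar ρ χ) (w : (Fin n → F) × (Fin n → F)) (t : F) :
    ρ ⟨w, t⟩ = χ t • ρ ⟨w, 0⟩ := by
  ext v
  rw [Heis.mk_eq_mk_zero_mul, map_mul, Module.End.mul_apply, hcc]
  rfl

lemma rho_mk_mul_rho_mk (hcc : HasCentralChar ρ χ) (w w' : (Fin n → F) × (Fin n → F)) :
    ρ ⟨w, 0⟩ * ρ ⟨w', 0⟩ = χ ((2 : F)⁻¹ * symp w w') • ρ ⟨w + w', 0⟩ := by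
  rw [← map_mul, ← hcc.rho_mk]
  exact congrArg ρ (Heis.ext rfl (by simp [Heis.mul_t]))

lemma linHom_mk (hcc : HasCentralChar ρ χ) (w : (Fin n → F) × (Fin n → F)) (t : F) :
    ρ.linHom ρ ⟨w, t⟩ = ρ.linHom ρ ⟨w, 0⟩ := by
  have hcentral : ρ.linHom ρ ⟨0, t⟩ = 1 := by
    ext Y v
    rw [Representation.linHom_apply, Heis.mk_inv, neg_zero, LinearMap.comp_apply,
      LinearMap.comp_apply, hcc, hcc, map_smul, smul_smul, ← AddChar.map_add_eq_mul,
      add_neg_cancel, AddChar.map_zero_eq_one, one_smul, Module.End.one_apply]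
  rw [Heis.mk_eq_mk_zero_mul, map_mul, hcentral, one_mul]

lemma linHom_rho_mk (hcc : HasCentralChar ρ χ) (h2 : (2 : F) ≠ 0) (g : Heis F n)
    (u : (Fin n → F) × (Fin n → F)) :
    ρ.linHom ρ g (ρ ⟨u, 0⟩) = χ (symp g.w u) • ρ ⟨u, 0⟩ := by
  rw [linHom_self_rho, Heis.mul_mul_inv h2, hcc.rho_mk, zero_add]

lemma trace_rho_mk_eq_zero [FiniteDimensional ℂ V] (hcc : HasCentralChar ρ χ) (hχ : χ ≠ 1)
    (h2 : (2 : F) ≠ 0) {u : (Fin n → F) × (Fin n → F)} (hu : u ≠ 0) :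
    LinearMap.trace ℂ V (ρ ⟨u, 0⟩) = 0 := by
  obtain ⟨s, hs⟩ := AddChar.ne_one_iff.1 hχ
  obtain ⟨v, rfl⟩ := sympLeft_surjective hu s
  have hconj := ρ.char_conj ⟨u, 0⟩ ⟨v, 0⟩
  rw [Heis.mul_mul_inv h2, zero_add] at hconj
  rw [Representation.character, Representation.character, hcc.rho_mk u, map_smul,
    smul_eq_mul] at hconj
  exact (mul_left_eq_self₀.1 hconj).resolve_left hs

end HasCentralChar


section HilbertSchmidt

variable {V : Type} [NormedAddCommGroup V] [InnerProductSpace ℂ V] [FiniteDimensional ℂ V]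

noncomputable def hsFormLeft (S : V →ₗ[ℂ] V) : Module.Dual ℂ (V →ₗ[ℂ] V) :=
  (Module.finrank ℂ V : ℂ)⁻¹ • (LinearMap.trace ℂ V ∘ₗ LinearMap.mulRight ℂ (LinearMap.adjoint S))

lemma hsFormLeft_apply (S T : V →ₗ[ℂ] V) : hsFormLeft S T = hsForm T S := by
  rw [hsFormLeft, hsForm, div_eq_inv_mul]
  rfl

variable {χ : AddChar F ℂ} {ρ : Representation ℂ (Heis F n) V}

lemma hsForm_rho_mk (hcc : HasCentralChar ρ χ)
    (hunitary : ∀ (h : Heis F n) (u v : V), (inner ℂ (ρ h u) (ρ h v) : ℂ) = inner ℂ u v)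
    (w w' : (Fin n → F) × (Fin n → F)) :
    hsForm (ρ ⟨w, 0⟩ : V →ₗ[ℂ] V) (ρ ⟨w', 0⟩) =
      χ ((2 : F)⁻¹ * symp w (-w')) * LinearMap.trace ℂ V (ρ ⟨w - w', 0⟩) /
        (Module.finrank ℂ V : ℂ) := by
  rw [hsForm, adjoint_rho_eq_rho_inv hunitary, Heis.mk_inv, neg_zero, ← Module.End.mul_eq_comp,
    hcc.rho_mk_mul_rho_mk, map_smul, smul_eq_mul, sub_eq_add_neg]

lemma hsForm_rho_mk_self [Nontrivial V] (hcc : HasCentralChar ρ χ)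
    (hunitary : ∀ (h : Heis F n) (u v : V), (inner ℂ (ρ h u) (ρ h v) : ℂ) = inner ℂ u v)
    (w : (Fin n → F) × (Fin n → F)) :
    hsForm (ρ ⟨w, 0⟩ : V →ₗ[ℂ] V) (ρ ⟨w, 0⟩) = 1 := by
  have hd : (Module.finrank ℂ V : ℂ) ≠ 0 := Nat.cast_ne_zero.2 Module.finrank_pos.ne'
  rw [hsForm_rho_mk hcc hunitary, symp_neg_right, Heis.symp_self, neg_zero, mul_zero,
    AddChar.map_zero_eq_one, one_mul, sub_self,
    show (⟨0, 0⟩ : Heis F n) = 1 from rfl, map_one,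
    LinearMap.trace_one, div_self hd]

lemma hsForm_rho_mk_of_ne (hcc : HasCentralChar ρ χ) (hχ : χ ≠ 1) (h2 : (2 : F) ≠ 0)
    (hunitary : ∀ (h : Heis F n) (u v : V), (inner ℂ (ρ h u) (ρ h v) : ℂ) = inner ℂ u v)
    {w w' : (Fin n → F) × (Fin n → F)} (hne : w ≠ w') :
    hsForm (ρ ⟨w, 0⟩ : V →ₗ[ℂ] V) (ρ ⟨w', 0⟩) = 0 := by
  rw [hsForm_rho_mk hcc hunitary, hcc.trace_rho_mk_eq_zero hχ h2 (sub_ne_zero.2 hne), mul_zero,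
    zero_div]

end HilbertSchmidt


section Twirl

variable [Fintype F] {V : Type} [AddCommGroup V] [Module ℂ V] {χ : AddChar F ℂ}
  {ρ : Representation ℂ (Heis F n) V}

noncomputable def twirl (ρ : Representation ℂ (Heis F n) V) (χ : AddChar F ℂ)
    (u : (Fin n → F) × (Fin n → F)) (X : V →ₗ[ℂ] V) : V →ₗ[ℂ] V :=
  ∑ w, χ (symp u w) • ρ.linHom ρ ⟨w, 0⟩ X

lemma HasCentralChar.linHom_twirl (hcc : HasCentralChar ρ χ) (g : Heis F n)
    (u : (Fin n → F) × (Fin n → F)) (X : V →ₗ[ℂ] V) :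
    ρ.linHom ρ g (twirl ρ χ u X) = χ (symp g.w u) • twirl ρ χ u X := by
  have hshift (w : (Fin n → F) × (Fin n → F)) :
      ρ.linHom ρ g (ρ.linHom ρ ⟨w, 0⟩ X) = ρ.linHom ρ ⟨g.w + w, 0⟩ X := by
    rw [← Module.End.mul_apply, ← map_mul]
    exact LinearMap.congr_fun (hcc.linHom_mk (g.w + w) _) X
  simp only [twirl, map_sum, map_smul, hshift, Finset.smul_sum, smul_smul]
  refine Fintype.sum_equiv (Equiv.addLeft g.w) _ _ fun w => ?_
  rw [Equiv.coe_addLeft, ← AddChar.map_add_eq_mul, symp_add_right, symp_antisymm g.w u,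
    neg_add_cancel_left]

lemma HasCentralChar.exists_twirl_eq_smul [FiniteDimensional ℂ V] (hirr : IsIrred ρ)
    (hcc : HasCentralChar ρ χ) (h2 : (2 : F) ≠ 0) (u : (Fin n → F) × (Fin n → F))
    (X : V →ₗ[ℂ] V) : ∃ c : ℂ, twirl ρ χ u X = c • ρ ⟨u, 0⟩ := by
  -- `twirl ρ χ u X` and `ρ(u,0)` transform by the same character under conjugation
  have hinv : ∀ g, ρ.linHom ρ g (twirl ρ χ u X * ρ ⟨-u, 0⟩) = twirl ρ χ u X * ρ ⟨-u, 0⟩ := by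
    intro g
    rw [linHom_self_mul, hcc.linHom_twirl, hcc.linHom_rho_mk h2, smul_mul_smul_comm,
      ← AddChar.map_add_eq_mul, symp_neg_right, add_neg_cancel, AddChar.map_zero_eq_one,
      one_smul]
  obtain ⟨c, hc⟩ := hirr.exists_eq_smul_one hinv
  have hunit : ρ ⟨-u, 0⟩ * ρ ⟨u, 0⟩ = 1 := by
    rw [← map_mul, show (⟨-u, 0⟩ : Heis F n) = ⟨u, 0⟩⁻¹ from Heis.ext rfl neg_zero.symm,
      inv_mul_cancel, map_one]
  refine ⟨c, ?_⟩
  rw [← mul_one (twirl ρ χ u X), ← hunit, ← mul_assoc, hc, smul_mul_assoc, one_mul]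

lemma sum_twirl (hχ : χ ≠ 1) (X : V →ₗ[ℂ] V) :
    ∑ u, twirl ρ χ u X = (Fintype.card ((Fin n → F) × (Fin n → F)) : ℂ) • X := by
  simp only [twirl]
  rw [Finset.sum_comm]
  simp only [← Finset.sum_smul]
  rw [Finset.sum_eq_single 0 (fun w _ hw => by rw [sum_char_symp_eq_zero hχ hw, zero_smul])
    (fun h => absurd (Finset.mem_univ _) h)]
  simp [symp, show (⟨0, 0⟩ : Heis F n) = 1 from rfl]

lemma span_rho_mk_eq_top [FiniteDimensional ℂ V] (hirr : IsIrred ρ) (hcc : HasCentralChar ρ χ)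
    (hχ : χ ≠ 1) (h2 : (2 : F) ≠ 0) :
    Submodule.span ℂ (Set.range fun w : (Fin n → F) × (Fin n → F) => (ρ ⟨w, 0⟩ : V →ₗ[ℂ] V)) =
      ⊤ := by
  refine eq_top_iff.2 fun X _ => ?_
  have hcard : (Fintype.card ((Fin n → F) × (Fin n → F)) : ℂ) ≠ 0 :=
    Nat.cast_ne_zero.2 Fintype.card_ne_zero
  rw [← inv_smul_smul₀ hcard X, ← sum_twirl hχ]
  refine Submodule.smul_mem _ _ (Submodule.sum_mem _ fun u _ => ?_)
  obtain ⟨c, hc⟩ := hcc.exists_twirl_eq_smul hirr h2 u X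
  rw [hc]
  exact Submodule.smul_mem _ _ (Submodule.subset_span ⟨u, rfl⟩)

end Twirl

/-- Theorem 7.2.3, the Weyl transform: the operators
`ρ(w,0)`, `w ∈ W`, form an orthogonal basis of `End(V)` with respect to the
normalized Hilbert–Schmidt inner product, each of norm `1`; i.e., the Weyl
transform `ℓ²(W) → HS(ρ_χ)` is a bijective isometry. -/
theorem weyl_transform_orthogonal_basis
    (F : Type) [Field F] [Fintype F] (hodd : Odd (Fintype.card F))
    (n : ℕ) (χ : AddChar F ℂ) (hχ : χ ≠ 1)
    {V : Type} [NormedAddCommGroup V] [InnerProductSpace ℂ V] [FiniteDimensional ℂ V]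
    (ρ : Representation ℂ (Heis F n) V)
    (hirr : IsIrred ρ) (hcc : HasCentralChar ρ χ)
    (hunitary : ∀ (h : Heis F n) (u v : V),
      (inner ℂ (ρ h u) (ρ h v) : ℂ) = inner ℂ u v) :
    -- each ρ(w,0) is a unit vector for the Hilbert–Schmidt inner product
    (∀ w : (Fin n → F) × (Fin n → F),
      hsForm (ρ ⟨w, 0⟩ : V →ₗ[ℂ] V) (ρ ⟨w, 0⟩ : V →ₗ[ℂ] V) = 1) ∧
    -- distinct w give orthogonal operators
    (∀ w w' : (Fin n → F) × (Fin n → F), w ≠ w' →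
      hsForm (ρ ⟨w, 0⟩ : V →ₗ[ℂ] V) (ρ ⟨w', 0⟩ : V →ₗ[ℂ] V) = 0) ∧
    -- the family is linearly independent and spans End(V):
    -- equivalently, the Weyl transform f ↦ Σ_w f(w)·ρ(w,0) is a bijective
    -- isometry from ℓ²(W) onto (End V, B)
    LinearIndependent ℂ (fun w : (Fin n → F) × (Fin n → F) => (ρ ⟨w, 0⟩ : V →ₗ[ℂ] V)) ∧
    Submodule.span ℂ
      (Set.range (fun w : (Fin n → F) × (Fin n → F) => (ρ ⟨w, 0⟩ : V →ₗ[ℂ] V))) = ⊤ := by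
  have h2 := two_ne_zero_of_odd_card hodd
  have := hirr.nontrivial
  have hnorm := hsForm_rho_mk_self hcc hunitary
  have horth : ∀ w w' : (Fin n → F) × (Fin n → F), w ≠ w' →
      hsForm (ρ ⟨w, 0⟩ : V →ₗ[ℂ] V) (ρ ⟨w', 0⟩ : V →ₗ[ℂ] V) = 0 :=
    fun _ _ hne => hsForm_rho_mk_of_ne hcc hχ h2 hunitary hne
  refine ⟨hnorm, horth, ?_, span_rho_mk_eq_top hirr hcc hχ h2⟩
  exact linearIndependent_of_biorthogonal (fun w => hsFormLeft (ρ ⟨w, 0⟩))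
    (fun w => by rw [hsFormLeft_apply, hnorm])
    (fun w w' hne => by rw [hsFormLeft_apply, horth w w' hne])

end Stmt4
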